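/- Let S = ⟨n₁, …, n_k⟩ be a numerical monoid with minimal generators n₁ < n₂ < ⋯ < n_k. For every x ∈ S with x > 2k·n₂·n_k², one has Δ(x) = Δ(x + n₁·n_k), where Δ(x) is the delta set of x. -/
import Mathlib


/-- The numerical monoid generated by `n 0, …, n (k-1)`. -/
def NumMon {k : ℕ} (n : Fin k → ℕ) : Set ℕ := {x | ∃ c : Fin k → ℕ, ∑ i, c i * n i = x}

/-- The generating set is minimal: no generator lies in the submonoid
generated by the remaining generators. -/
def MinimalGens {k : ℕ} (n : Fin k → ℕ) : Prop :=
  ∀ i, ¬ ∃ c : Fin k → ℕ, c i = 0 ∧ ∑ j, c j * n j = n i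

/-- The set of factorization lengths of `x`. -/
def GLenSet {k : ℕ} (n : Fin k → ℕ) (x : ℕ) : Set ℕ :=
  {l | ∃ c : Fin k → ℕ, ∑ i, c i * n i = x ∧ ∑ i, c i = l}

/-- The delta set of `x`: gaps between consecutive factorization lengths. -/
def GDeltaSet {k : ℕ} (n : Fin k → ℕ) (x : ℕ) : Set ℕ :=
  {d | ∃ a ∈ GLenSet n x, ∃ b ∈ GLenSet n x, a < b ∧ d = b - a ∧
    ∀ l ∈ GLenSet n x, ¬ (a < l ∧ l < b)}

/-! ### Auxiliary material -/

/-- The delta set of an arbitrary set of naturals. -/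
def DSet (L : Set ℕ) : Set ℕ :=
  {d | ∃ a ∈ L, ∃ b ∈ L, a < b ∧ d = b - a ∧ ∀ l ∈ L, ¬ (a < l ∧ l < b)}

lemma GDeltaSet_eq_DSet {k : ℕ} (n : Fin k → ℕ) (x : ℕ) :
    GDeltaSet n x = DSet (GLenSet n x) := rfl

lemma sum_update_add' {k : ℕ} (s : Finset (Fin k)) (c : Fin k → ℕ) (j : Fin k) (hj : j ∈ s)
    (t : ℕ) (g : Fin k → ℕ) :
    ∑ i ∈ s, (Function.update c j (c j + t)) i * g i = (∑ i ∈ s, c i * g i) + t * g j := by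
  rw [← Finset.add_sum_erase _ (fun i => Function.update c j (c j + t) i * g i) hj,
      ← Finset.add_sum_erase _ (fun i => c i * g i) hj]
  have h1 : ∑ i ∈ s.erase j, Function.update c j (c j + t) i * g i
      = ∑ i ∈ s.erase j, c i * g i := by
    apply Finset.sum_congr rfl
    intro i hi
    rw [Function.update_of_ne (Finset.ne_of_mem_erase hi)]
  rw [h1, Function.update_self]
  ring

lemma sum_update_add {k : ℕ} (c : Fin k → ℕ) (j : Fin k) (t : ℕ) (g : Fin k → ℕ) :
    ∑ i, (Function.update c j (c j + t)) i * g i = (∑ i, c i * g i) + t * g j :=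
  sum_update_add' Finset.univ c j (Finset.mem_univ j) t g

lemma sum_update_count' {k : ℕ} (s : Finset (Fin k)) (c : Fin k → ℕ) (j : Fin k) (hj : j ∈ s)
    (t : ℕ) :
    ∑ i ∈ s, (Function.update c j (c j + t)) i = (∑ i ∈ s, c i) + t := by
  have := sum_update_add' s c j hj t (fun _ => 1)
  simpa using this

/-! #### Delta set combinatorics -/

lemma DSet_inter_Iic_subset (L : Set ℕ) (c : ℕ) : DSet (L ∩ Set.Iic c) ⊆ DSet L := by
  rintro g ⟨a, ⟨haL, hac⟩, b, ⟨hbL, hbc⟩, hab, hg, hcons⟩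
  refine ⟨a, haL, b, hbL, hab, hg, ?_⟩
  intro l hl hbet
  exact hcons l ⟨hl, le_trans (le_of_lt hbet.2) hbc⟩ hbet

lemma DSet_inter_Ici_subset (L : Set ℕ) (p : ℕ) : DSet (L ∩ Set.Ici p) ⊆ DSet L := by
  rintro g ⟨a, ⟨haL, hap⟩, b, ⟨hbL, hbp⟩, hab, hg, hcons⟩
  refine ⟨a, haL, b, hbL, hab, hg, ?_⟩
  intro l hl hbet
  exact hcons l ⟨hl, le_trans hap (le_of_lt hbet.1)⟩ hbet

lemma DSet_split (L : Set ℕ) (p c : ℕ)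
    (H : ∀ a ∈ L, a < p → ∃ l ∈ L, p ≤ l ∧ l ≤ c) :
    DSet L = DSet (L ∩ Set.Iic c) ∪ DSet (L ∩ Set.Ici p) := by
  apply Set.Subset.antisymm
  · rintro g ⟨a, haL, b, hbL, hab, hg, hcons⟩
    by_cases hap : a < p
    · left
      obtain ⟨l, hlL, hpl, hlc⟩ := H a haL hap
      have hbl : b ≤ l := by
        by_contra hcon
        exact hcons l hlL ⟨lt_of_lt_of_le hap hpl, by omega⟩
      refine ⟨a, ⟨haL, by simp; omega⟩, b, ⟨hbL, by simp; omega⟩, hab, hg, ?_⟩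
      intro l' hl' hbet
      exact hcons l' hl'.1 hbet
    · right
      refine ⟨a, ⟨haL, by simp; omega⟩, b, ⟨hbL, by simp; omega⟩, hab, hg, ?_⟩
      intro l' hl' hbet
      exact hcons l' hl'.1 hbet
  · rintro g (hg | hg)
    · exact DSet_inter_Iic_subset L c hg
    · exact DSet_inter_Ici_subset L p hg

lemma DSet_image_add (L : Set ℕ) (t : ℕ) : DSet ((· + t) '' L) = DSet L := by
  ext g
  constructor
  · rintro ⟨a', ⟨a, ha, rfl⟩, b', ⟨b, hb, rfl⟩, hab, hg, hcons⟩
    beta_reduce at hab hg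
    refine ⟨a, ha, b, hb, by omega, by omega, ?_⟩
    intro l hl hbet
    have hc := hcons (l + t) ⟨l, hl, rfl⟩
    beta_reduce at hc
    omega
  · rintro ⟨a, ha, b, hb, hab, hg, hcons⟩
    refine ⟨a + t, ⟨a, ha, rfl⟩, b + t, ⟨b, hb, rfl⟩, by omega, by omega, ?_⟩
    rintro l' ⟨l, hl, rfl⟩ hbet
    beta_reduce at hbet
    exact hcons l hl (by omega)

lemma image_add_inter_Iic (S : Set ℕ) (t c : ℕ) :
    ((· + t) '' S) ∩ Set.Iic (c + t) = (· + t) '' (S ∩ Set.Iic c) := by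
  ext m
  constructor
  · rintro ⟨⟨s, hs, rfl⟩, hm⟩
    simp only [Set.mem_Iic] at hm
    beta_reduce at hm
    exact ⟨s, ⟨hs, Set.mem_Iic.mpr (by omega)⟩, rfl⟩
  · rintro ⟨s, ⟨hs, hsc⟩, rfl⟩
    simp only [Set.mem_Iic] at hsc
    refine ⟨⟨s, hs, rfl⟩, Set.mem_Iic.mpr ?_⟩
    beta_reduce
    omega

lemma image_add_inter_Ici (S : Set ℕ) (t p : ℕ) :
    ((· + t) '' S) ∩ Set.Ici (p + t) = (· + t) '' (S ∩ Set.Ici p) := by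
  ext m
  constructor
  · rintro ⟨⟨s, hs, rfl⟩, hm⟩
    simp only [Set.mem_Ici] at hm
    beta_reduce at hm
    exact ⟨s, ⟨hs, Set.mem_Ici.mpr (by omega)⟩, rfl⟩
  · rintro ⟨s, ⟨hs, hsp⟩, rfl⟩
    simp only [Set.mem_Ici] at hsp
    refine ⟨⟨s, hs, rfl⟩, Set.mem_Ici.mpr ?_⟩
    beta_reduce
    omega

/-! #### Reaching a window by d-steps -/

lemma step_reach (W : Set ℕ) (dd : ℕ) (hdd : 0 < dd)
    (hW : ∀ m ∈ W, m + dd ∈ W) (p : ℕ) :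
    ∀ l, l ∈ W → l < p → ∃ m ∈ W, p ≤ m ∧ m < p + dd := by
  have key : ∀ N l, l ∈ W → l < p → p - l ≤ N → ∃ m ∈ W, p ≤ m ∧ m < p + dd := by
    intro N
    induction N with
    | zero => intro l _ hlp h; omega
    | succ N ih =>
      intro l hl hlp h
      by_cases hc : p ≤ l + dd
      · exact ⟨l + dd, hW l hl, hc, by omega⟩
      · exact ih (l + dd) (hW l hl) (by omega) (by omega)
  intro l hl hlp
  exact key (p - l) l hl hlp le_rfl

/-! #### Bezout for finite gcds -/

lemma finset_gcd_bezout {ι : Type*} [DecidableEq ι] (s : Finset ι) (w : ι → ℕ) :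
    ∃ z : ι → ℤ, ∑ i ∈ s, z i * w i = ((s.gcd w : ℕ) : ℤ) := by
  classical
  induction s using Finset.induction_on with
  | empty => exact ⟨0, by simp⟩
  | @insert a s ha ih =>
    obtain ⟨z, hz⟩ := ih
    refine ⟨fun i => if i = a then Nat.gcdA (w a) (s.gcd w)
      else Nat.gcdB (w a) (s.gcd w) * z i, ?_⟩
    rw [Finset.sum_insert ha, Finset.gcd_insert]
    beta_reduce
    have hrw : ∀ i ∈ s, (if i = a then Nat.gcdA (w a) (s.gcd w)
        else Nat.gcdB (w a) (s.gcd w) * z i) * (w i : ℤ)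
        = Nat.gcdB (w a) (s.gcd w) * (z i * w i) := by
      intro i hi
      rw [if_neg (by rintro rfl; exact ha hi)]
      ring
    rw [Finset.sum_congr rfl hrw, ← Finset.mul_sum, hz, if_pos rfl]
    have hh : GCDMonoid.gcd (w a) (s.gcd w) = Nat.gcd (w a) (s.gcd w) := rfl
    rw [hh, Nat.gcd_eq_gcd_ab]
    ring

/-- Every generated number is divisible by the gcd of the generators. -/
lemma gcd_dvd_of_mem_numMon {k : ℕ} (w : Fin k → ℕ) (u : ℕ) (hu : u ∈ NumMon w) :
    Finset.univ.gcd w ∣ u := by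
  obtain ⟨c, rfl⟩ := hu
  exact Finset.dvd_sum (fun i _ => Dvd.dvd.mul_left (Finset.gcd_dvd (Finset.mem_univ i)) (c i))

/-! #### Frobenius-type lemma -/

lemma mem_numMon_of_dvd_of_big {k : ℕ} (w : Fin k → ℕ) (jk : Fin k) (D : ℕ)
    (hjk : w jk = D) (hD : 0 < D) (hle : ∀ i, w i ≤ D)
    (u : ℕ) (hdvd : Finset.univ.gcd w ∣ u) (hu : k * (D * D) ≤ u) :
    u ∈ NumMon w := by
  classical
  set g := Finset.univ.gcd w with hg
  have hgD : g ∣ D := hjk ▸ Finset.gcd_dvd (Finset.mem_univ jk)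
  obtain ⟨z, hz⟩ := finset_gcd_bezout (Finset.univ : Finset (Fin k)) w
  obtain ⟨t, ht⟩ := hdvd
  set y : Fin k → ℤ := fun i => z i * t with hy
  have hyu : ∑ i, y i * (w i : ℤ) = (u : ℤ) := by
    have h1 : ∑ i, y i * (w i : ℤ) = (∑ i, z i * w i) * t := by
      rw [Finset.sum_mul]
      apply Finset.sum_congr rfl
      intro i _
      simp only [hy]
      ring
    rw [h1, hz, ht]
    push_cast
    ring
  set c0 : Fin k → ℕ := fun i => if i = jk then 0 else ((y i) % (D : ℤ)).toNat with hc0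
  have hc0lt : ∀ i, c0 i ≤ D - 1 := by
    intro i
    by_cases h : i = jk
    · simp only [hc0, if_pos h]; omega
    · simp only [hc0, if_neg h]
      have h1 : 0 ≤ (y i) % (D : ℤ) := Int.emod_nonneg _ (by exact_mod_cast hD.ne')
      have h2 : (y i) % (D : ℤ) < D := Int.emod_lt_of_pos _ (by exact_mod_cast hD)
      omega
  set S : ℕ := ∑ i, c0 i * w i with hS
  have hSle : S ≤ k * ((D - 1) * D) := by
    have h1 : ∀ i ∈ (Finset.univ : Finset (Fin k)), c0 i * w i ≤ (D - 1) * D :=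
      fun i _ => Nat.mul_le_mul (hc0lt i) (hle i)
    calc S ≤ ∑ _i : Fin k, (D - 1) * D := Finset.sum_le_sum h1
    _ = k * ((D - 1) * D) := by
      rw [Finset.sum_const, Finset.card_univ, Fintype.card_fin, smul_eq_mul]
  have hSu : S ≤ u := by
    have : k * ((D - 1) * D) ≤ k * (D * D) := by
      apply Nat.mul_le_mul_left
      exact Nat.mul_le_mul_right D (by omega)
    omega
  have hdvdDiff : (D : ℤ) ∣ (u : ℤ) - S := by
    have hSZ : (S : ℤ) = ∑ i, (c0 i : ℤ) * w i := by rw [hS]; push_cast; rfl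
    rw [← hyu, hSZ, ← Finset.sum_sub_distrib]
    apply Finset.dvd_sum
    intro i _
    by_cases h : i = jk
    · have h0 : c0 i = 0 := by simp [hc0, h]
      rw [h0, h, hjk]
      exact ⟨y jk - 0, by push_cast; ring⟩
    · have hci : (c0 i : ℤ) = (y i) % (D : ℤ) := by
        simp only [hc0, if_neg h]
        have h1 : 0 ≤ (y i) % (D : ℤ) := Int.emod_nonneg _ (by exact_mod_cast hD.ne')
        omega
      rw [hci, ← sub_mul]
      exact Dvd.dvd.mul_right (Int.dvd_self_sub_of_emod_eq rfl) _
  obtain ⟨qz, hqz⟩ := hdvdDiff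
  have hqznn : 0 ≤ qz := by
    have h1 : (0 : ℤ) ≤ (u : ℤ) - S := by
      have h2 : (S : ℤ) ≤ (u : ℤ) := by exact_mod_cast hSu
      omega
    have hDz : (0 : ℤ) < (D : ℤ) := by exact_mod_cast hD
    nlinarith
  set q : ℕ := qz.toNat with hq
  have huSq : u = S + q * D := by
    have h3 : (u : ℤ) = S + q * D := by
      rw [hq, Int.toNat_of_nonneg hqznn]
      linear_combination hqz
    exact_mod_cast h3
  refine ⟨Function.update c0 jk (c0 jk + q), ?_⟩
  rw [sum_update_add c0 jk q w, hjk]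
  omega

/-! #### Reduction of representations -/

lemma reduce_rep {k : ℕ} (w : Fin k → ℕ) (jk : Fin k) (D : ℕ) (hD : 0 < D)
    (hjk : w jk = D) (hlt : ∀ i, i ≠ jk → w i < D)
    (u : ℕ) (hu : u ∈ NumMon w) :
    ∃ c : Fin k → ℕ, ∑ i, c i * w i = u ∧ ∀ i, i ≠ jk → c i < D := by
  classical
  obtain ⟨c, hc⟩ := hu
  have key : ∀ N (c : Fin k → ℕ), (∑ i ∈ Finset.univ.erase jk, c i) ≤ N →
      ∃ c' : Fin k → ℕ, ∑ i, c' i * w i = ∑ i, c i * w i ∧ ∀ i, i ≠ jk → c' i < D := by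
    intro N
    induction N with
    | zero =>
      intro c hsum
      refine ⟨c, rfl, ?_⟩
      intro i hi
      have hci : c i = 0 := by
        have hmem : i ∈ Finset.univ.erase jk := Finset.mem_erase.mpr ⟨hi, Finset.mem_univ i⟩
        have h2 := Finset.single_le_sum (f := fun j => c j) (fun _ _ => Nat.zero_le _) hmem
        beta_reduce at h2
        omega
      omega
    | succ N ih =>
      intro c hsum
      by_cases hgood : ∀ i, i ≠ jk → c i < D
      · exact ⟨c, rfl, hgood⟩
      · push_neg at hgood
        obtain ⟨i0, hi0ne, hi0D⟩ := hgood
        set cmid : Fin k → ℕ := Function.update c i0 (c i0 - D) with hcmid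
        have hcrec : c = Function.update cmid i0 (cmid i0 + D) := by
          funext i
          by_cases h : i = i0
          · subst h
            rw [Function.update_self]
            rw [hcmid, Function.update_self]
            omega
          · rw [Function.update_of_ne h, hcmid, Function.update_of_ne h]
        set c1 : Fin k → ℕ := Function.update cmid jk (cmid jk + w i0) with hc1
        have hval : ∑ i, c1 i * w i = ∑ i, c i * w i := by
          have e1 : ∑ i, c1 i * w i = (∑ i, cmid i * w i) + w i0 * w jk := by
            rw [hc1, sum_update_add]
          have e2 : ∑ i, c i * w i = (∑ i, cmid i * w i) + D * w i0 := by
            conv_lhs => rw [hcrec]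
            rw [sum_update_add]
          rw [e1, e2, hjk]
          ring
        have hmeas : (∑ i ∈ Finset.univ.erase jk, c1 i) + D
            = ∑ i ∈ Finset.univ.erase jk, c i := by
          have hmem : i0 ∈ Finset.univ.erase jk :=
            Finset.mem_erase.mpr ⟨hi0ne, Finset.mem_univ i0⟩
          have e1 : ∑ i ∈ Finset.univ.erase jk, c1 i
              = ∑ i ∈ Finset.univ.erase jk, cmid i := by
            apply Finset.sum_congr rfl
            intro i hi
            rw [hc1, Function.update_of_ne (Finset.ne_of_mem_erase hi)]
          have e2 : ∑ i ∈ Finset.univ.erase jk, c i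
              = (∑ i ∈ Finset.univ.erase jk, cmid i) + D := by
            conv_lhs => rw [hcrec]
            have := sum_update_count' (Finset.univ.erase jk) cmid i0 hmem D
            rw [this]
          omega
        obtain ⟨c', hc'val, hc'lt⟩ := ih c1 (by omega)
        exact ⟨c', by rw [hc'val, hval], hc'lt⟩
  obtain ⟨c', h1, h2⟩ := key (∑ i ∈ Finset.univ.erase jk, c i) c le_rfl
  exact ⟨c', by rw [h1, hc], h2⟩
/-! #### The structure theorem for length sets -/

lemma struct_thm {k : ℕ} (n e f : Fin k → ℕ) (a b dd : ℕ)
    (he : ∀ i, n i = a + e i) (hf : ∀ i, n i + f i = b)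
    (hab : a + dd = b) (hdd : 0 < dd)
    (jk j0 : Fin k) (hejk : e jk = dd) (helt : ∀ i, i ≠ jk → e i < dd)
    (hfj0 : f j0 = dd) (hflt : ∀ i, i ≠ j0 → f i < dd)
    (x m : ℕ) (hm : x ≤ m * b → 2 * (k * dd) ≤ m) :
    m ∈ GLenSet n x ↔
      m * a ≤ x ∧ x ≤ m * b ∧ (x - m * a) ∈ NumMon e ∧ (m * b - x) ∈ NumMon f := by
  have hej0 : e j0 = 0 := by
    have h1 := he j0; have h2 := hf j0; omega
  have hfjk : f jk = 0 := by
    have h1 := he jk; have h2 := hf jk; omega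
  have hgen1 : ∀ c' : Fin k → ℕ,
      ∑ i, c' i * n i = (∑ i, c' i) * a + ∑ i, c' i * e i := by
    intro c'
    rw [Finset.sum_mul, ← Finset.sum_add_distrib]
    apply Finset.sum_congr rfl
    intro i _
    rw [he i]; ring
  have hgen2 : ∀ c' : Fin k → ℕ,
      (∑ i, c' i * n i) + (∑ i, c' i * f i) = (∑ i, c' i) * b := by
    intro c'
    rw [Finset.sum_mul, ← Finset.sum_add_distrib]
    apply Finset.sum_congr rfl
    intro i _
    rw [← hf i]; ring
  constructor
  · rintro ⟨c, hcx, hcm⟩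
    have h1 := hgen1 c
    have h2 := hgen2 c
    rw [hcx, hcm] at h1 h2
    refine ⟨by omega, by omega, ⟨c, by omega⟩, ⟨c, by omega⟩⟩
  · rintro ⟨hma, hmb, hU, hV⟩
    have hmdd : 2 * (k * dd) ≤ m := hm hmb
    have hmb' : m * b = m * a + m * dd := by rw [← hab]; ring
    have h2kd : 2 * (k * dd) * dd = 2 * (k * (dd * dd)) := by ring
    have hmd2 : 2 * (k * dd) * dd ≤ m * dd := Nat.mul_le_mul_right dd hmdd
    have hsubmul : (m - k * dd) * dd = m * dd - (k * dd) * dd := Nat.sub_mul m (k * dd) dd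
    have hkdd2 : (k * dd) * dd = k * (dd * dd) := by ring
    by_cases hv : k * (dd * dd) ≤ m * b - x
    · -- use the e-side representation
      have hule : x - m * a ≤ (m - k * dd) * dd := by omega
      obtain ⟨c, hcu, hclt⟩ := reduce_rep e jk dd hdd hejk helt _ hU
      have hcjk : c jk * dd ≤ x - m * a := by
        have h1 := Finset.single_le_sum (f := fun i => c i * e i)
          (fun _ _ => Nat.zero_le _) (Finset.mem_univ jk)
        beta_reduce at h1
        rw [hejk] at h1
        omega
      have hcjkm : c jk ≤ m - k * dd :=
        Nat.le_of_mul_le_mul_right (by omega) hdd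
      have hrest : ∑ i ∈ Finset.univ.erase jk, c i ≤ (k - 1) * (dd - 1) := by
        have h1 := Finset.sum_le_card_nsmul (Finset.univ.erase jk) c (dd - 1)
          (fun i hi => by have := hclt i (Finset.ne_of_mem_erase hi); omega)
        rwa [Finset.card_erase_of_mem (Finset.mem_univ jk), Finset.card_univ,
          Fintype.card_fin, smul_eq_mul] at h1
      have hsplit : (∑ i, c i) = c jk + ∑ i ∈ Finset.univ.erase jk, c i :=
        (Finset.add_sum_erase _ c (Finset.mem_univ jk)).symm
      have hkd1 : (k - 1) * (dd - 1) ≤ k * dd := Nat.mul_le_mul (by omega) (by omega)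
      have hsm : (∑ i, c i) ≤ m := by omega
      refine ⟨Function.update c j0 (c j0 + (m - ∑ i, c i)), ?_, ?_⟩
      · rw [sum_update_add c j0 _ n, hgen1 c, hcu, he j0, hej0]
        have hma2 : (∑ i, c i) * a + (m - ∑ i, c i) * a = m * a := by
          rw [← Nat.add_mul]
          congr 1
          omega
        have : (m - ∑ i, c i) * (a + 0) = (m - ∑ i, c i) * a := by ring
        omega
      · rw [sum_update_count' Finset.univ c j0 (Finset.mem_univ j0)]
        omega
    · -- use the f-side representation
      have hvle : m * b - x ≤ (m - k * dd) * dd := by omega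
      obtain ⟨c, hcv, hclt⟩ := reduce_rep f j0 dd hdd hfj0 hflt _ hV
      have hcj0 : c j0 * dd ≤ m * b - x := by
        have h1 := Finset.single_le_sum (f := fun i => c i * f i)
          (fun _ _ => Nat.zero_le _) (Finset.mem_univ j0)
        beta_reduce at h1
        rw [hfj0] at h1
        omega
      have hcj0m : c j0 ≤ m - k * dd :=
        Nat.le_of_mul_le_mul_right (by omega) hdd
      have hrest : ∑ i ∈ Finset.univ.erase j0, c i ≤ (k - 1) * (dd - 1) := by
        have h1 := Finset.sum_le_card_nsmul (Finset.univ.erase j0) c (dd - 1)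
          (fun i hi => by have := hclt i (Finset.ne_of_mem_erase hi); omega)
        rwa [Finset.card_erase_of_mem (Finset.mem_univ j0), Finset.card_univ,
          Fintype.card_fin, smul_eq_mul] at h1
      have hsplit : (∑ i, c i) = c j0 + ∑ i ∈ Finset.univ.erase j0, c i :=
        (Finset.add_sum_erase _ c (Finset.mem_univ j0)).symm
      have hkd1 : (k - 1) * (dd - 1) ≤ k * dd := Nat.mul_le_mul (by omega) (by omega)
      have hsm : (∑ i, c i) ≤ m := by omega
      set cc := Function.update c jk (c jk + (m - ∑ i, c i)) with hcc
      have hccf : ∑ i, cc i * f i = m * b - x := by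
        rw [hcc, sum_update_add c jk _ f, hfjk, hcv]
        omega
      have hcccount : ∑ i, cc i = m := by
        rw [hcc, sum_update_count' Finset.univ c jk (Finset.mem_univ jk)]
        omega
      have hccval := hgen2 cc
      rw [hccf, hcccount] at hccval
      exact ⟨cc, by omega, hcccount⟩
/-! #### The master lemma: delta set splits into two windows -/

lemma master_split {k : ℕ} (n e f : Fin k → ℕ) (a b dd C gA gB : ℕ)
    (he : ∀ i, n i = a + e i) (hf : ∀ i, n i + f i = b)
    (hab : a + dd = b) (hdd : 0 < dd) (ha : 0 < a)
    (jk j0 : Fin k) (hejk : e jk = dd) (helt : ∀ i, i ≠ jk → e i < dd)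
    (hfj0 : f j0 = dd) (hflt : ∀ i, i ≠ j0 → f i < dd)
    (hgA : gA = Finset.univ.gcd e) (hgB : gB = Finset.univ.gcd f)
    (hC : C = k * (dd * dd))
    (x p c : ℕ)
    (hm : ∀ m, x ≤ m * b → 2 * (k * dd) ≤ m)
    (hcx : c * a + C ≤ x) (hpx : x + C ≤ p * b) (hpc : p + dd ≤ c + 1) :
    GDeltaSet n x =
      DSet ({m : ℕ | (gA : ℤ) ∣ (x : ℤ) - m * a ∧ x ≤ m * b ∧ (m * b - x) ∈ NumMon f}
        ∩ Set.Iic c) ∪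
      DSet ({m : ℕ | (gB : ℤ) ∣ (m : ℤ) * b - x ∧ m * a ≤ x ∧ (x - m * a) ∈ NumMon e}
        ∩ Set.Ici p) := by
  have hST : ∀ m, m ∈ GLenSet n x ↔
      m * a ≤ x ∧ x ≤ m * b ∧ (x - m * a) ∈ NumMon e ∧ (m * b - x) ∈ NumMon f :=
    fun m => struct_thm n e f a b dd he hf hab hdd jk j0 hejk helt hfj0 hflt x m (hm m)
  have hele : ∀ i, e i ≤ dd := by
    intro i
    by_cases h : i = jk
    · rw [h, hejk]
    · exact (helt i h).le
  have hfle : ∀ i, f i ≤ dd := by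
    intro i
    by_cases h : i = j0
    · rw [h, hfj0]
    · exact (hflt i h).le
  have hgAd : gA ∣ dd := by rw [hgA, ← hejk]; exact Finset.gcd_dvd (Finset.mem_univ jk)
  have hgBd : gB ∣ dd := by rw [hgB, ← hfj0]; exact Finset.gcd_dvd (Finset.mem_univ j0)
  have hgAdZ : (gA : ℤ) ∣ (dd : ℤ) := Int.natCast_dvd_natCast.mpr hgAd
  have hgBdZ : (gB : ℤ) ∣ (dd : ℤ) := Int.natCast_dvd_natCast.mpr hgBd
  set W : Set ℕ := {m : ℕ | (gA : ℤ) ∣ (x : ℤ) - m * a ∧ (gB : ℤ) ∣ (m : ℤ) * b - x}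
    with hW
  have hWstep : ∀ m ∈ W, m + dd ∈ W := by
    rintro m ⟨h1, h2⟩
    constructor
    · have heq : (x : ℤ) - (↑(m + dd)) * a = ((x : ℤ) - m * a) - dd * a := by
        push_cast; ring
      rw [heq]
      exact dvd_sub h1 (Dvd.dvd.mul_right hgAdZ _)
    · have heq : (↑(m + dd) : ℤ) * b - x = ((m : ℤ) * b - x) + dd * b := by
        push_cast; ring
      rw [heq]
      exact dvd_add h2 (Dvd.dvd.mul_right hgBdZ _)
  have hLW : ∀ m ∈ GLenSet n x, m ∈ W := by
    intro m hm'
    obtain ⟨h1, h2, h3, h4⟩ := (hST m).mp hm'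
    constructor
    · have hdvd : gA ∣ (x - m * a) := by
        rw [hgA]; exact gcd_dvd_of_mem_numMon e _ h3
      have h5 : ((x - m * a : ℕ) : ℤ) = (x : ℤ) - (m : ℤ) * a := by
        push_cast [h1]
        omega
      exact h5 ▸ Int.natCast_dvd_natCast.mpr hdvd
    · have hdvd : gB ∣ (m * b - x) := by
        rw [hgB]; exact gcd_dvd_of_mem_numMon f _ h4
      have h5 : ((m * b - x : ℕ) : ℤ) = (m : ℤ) * b - x := by
        push_cast [h2]
        omega
      exact h5 ▸ Int.natCast_dvd_natCast.mpr hdvd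
  have hzone : ∀ m ∈ W, p ≤ m → m ≤ c → m ∈ GLenSet n x := by
    rintro m ⟨hd1, hd2⟩ hpm hmc
    have hma : m * a + C ≤ x := by
      have := Nat.mul_le_mul_right a hmc
      omega
    have hmbb : x + C ≤ m * b := by
      have := Nat.mul_le_mul_right b hpm
      omega
    apply (hST m).mpr
    refine ⟨by omega, by omega, ?_, ?_⟩
    · apply mem_numMon_of_dvd_of_big e jk dd hejk hdd hele
      · rw [← hgA]
        have h5 : ((x - m * a : ℕ) : ℤ) = (x : ℤ) - (m : ℤ) * a := by
          push_cast [show m * a ≤ x by omega]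
          omega
        exact_mod_cast h5 ▸ hd1
      · omega
    · apply mem_numMon_of_dvd_of_big f j0 dd hfj0 hdd hfle
      · rw [← hgB]
        have h5 : ((m * b - x : ℕ) : ℤ) = (m : ℤ) * b - x := by
          push_cast [show x ≤ m * b by omega]
          omega
        exact_mod_cast h5 ▸ hd2
      · omega
  have hH : ∀ l ∈ GLenSet n x, l < p → ∃ l' ∈ GLenSet n x, p ≤ l' ∧ l' ≤ c := by
    intro l hl hlp
    obtain ⟨m', hm'W, hpm', hm'lt⟩ := step_reach W dd hdd hWstep p l (hLW l hl) hlp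
    exact ⟨m', hzone m' hm'W hpm' (by omega), hpm', by omega⟩
  have hbot : GLenSet n x ∩ Set.Iic c
      = {m : ℕ | (gA : ℤ) ∣ (x : ℤ) - m * a ∧ x ≤ m * b ∧ (m * b - x) ∈ NumMon f}
        ∩ Set.Iic c := by
    ext m
    simp only [Set.mem_inter_iff, Set.mem_Iic, Set.mem_setOf_eq]
    constructor
    · rintro ⟨hmL, hmc⟩
      obtain ⟨h1, h2, h3, h4⟩ := (hST m).mp hmL
      exact ⟨⟨(hLW m hmL).1, h2, h4⟩, hmc⟩
    · rintro ⟨⟨hdvd, h2, h4⟩, hmc⟩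
      have hma : m * a + C ≤ x := by
        have := Nat.mul_le_mul_right a hmc
        omega
      refine ⟨(hST m).mpr ⟨by omega, h2, ?_, h4⟩, hmc⟩
      apply mem_numMon_of_dvd_of_big e jk dd hejk hdd hele
      · rw [← hgA]
        have h5 : ((x - m * a : ℕ) : ℤ) = (x : ℤ) - (m : ℤ) * a := by
          push_cast [show m * a ≤ x by omega]
          omega
        exact_mod_cast h5 ▸ hdvd
      · omega
  have htop : GLenSet n x ∩ Set.Ici p
      = {m : ℕ | (gB : ℤ) ∣ (m : ℤ) * b - x ∧ m * a ≤ x ∧ (x - m * a) ∈ NumMon e}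
        ∩ Set.Ici p := by
    ext m
    simp only [Set.mem_inter_iff, Set.mem_Ici, Set.mem_setOf_eq]
    constructor
    · rintro ⟨hmL, hpm⟩
      obtain ⟨h1, h2, h3, h4⟩ := (hST m).mp hmL
      exact ⟨⟨(hLW m hmL).2, h1, h3⟩, hpm⟩
    · rintro ⟨⟨hdvd, h1, h3⟩, hpm⟩
      have hmbb : x + C ≤ m * b := by
        have := Nat.mul_le_mul_right b hpm
        omega
      refine ⟨(hST m).mpr ⟨h1, by omega, h3, ?_⟩, hpm⟩
      apply mem_numMon_of_dvd_of_big f j0 dd hfj0 hdd hfle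
      · rw [← hgB]
        have h5 : ((m * b - x : ℕ) : ℤ) = (m : ℤ) * b - x := by
          push_cast [show x ≤ m * b by omega]
          omega
        exact_mod_cast h5 ▸ hdvd
      · omega
  rw [GDeltaSet_eq_DSet, DSet_split (GLenSet n x) p c hH, hbot, htop]
theorem numerical_monoid_delta_periodic {k : ℕ} (hk : 2 ≤ k)
    (n : Fin k → ℕ) (hpos : ∀ i, 0 < n i) (hmono : StrictMono n)
    (hmin : MinimalGens n) (x : ℕ) (hx : x ∈ NumMon n)
    (hbig : 2 * k * n ⟨1, by omega⟩ * (n ⟨k - 1, by omega⟩) ^ 2 < x) :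
    GDeltaSet n x = GDeltaSet n (x + n ⟨0, by omega⟩ * n ⟨k - 1, by omega⟩) := by
  have hlt0 : 0 < k := by omega
  have hlt1 : 1 < k := by omega
  have hltk : k - 1 < k := by omega
  obtain ⟨a, ha⟩ : ∃ a, a = n ⟨0, hlt0⟩ := ⟨_, rfl⟩
  obtain ⟨b, hb⟩ : ∃ b, b = n ⟨k - 1, hltk⟩ := ⟨_, rfl⟩
  obtain ⟨n2, hn2⟩ : ∃ n2, n2 = n ⟨1, hlt1⟩ := ⟨_, rfl⟩
  obtain ⟨dd, hdd'⟩ : ∃ dd, dd = b - a := ⟨_, rfl⟩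
  obtain ⟨C, hC'⟩ : ∃ C, C = k * (dd * dd) := ⟨_, rfl⟩
  obtain ⟨e, he'⟩ : ∃ e : Fin k → ℕ, e = fun i => n i - a := ⟨_, rfl⟩
  obtain ⟨f, hf'⟩ : ∃ f : Fin k → ℕ, f = fun i => b - n i := ⟨_, rfl⟩
  obtain ⟨gA, hgA'⟩ : ∃ gA, gA = Finset.univ.gcd e := ⟨_, rfl⟩
  obtain ⟨gB, hgB'⟩ : ∃ gB, gB = Finset.univ.gcd f := ⟨_, rfl⟩
  -- basic facts about the generators
  have hai : ∀ i, a ≤ n i := by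
    intro i
    rw [ha]
    exact hmono.monotone (by simp [Fin.le_def])
  have hbi : ∀ i, n i ≤ b := by
    intro i
    rw [hb]
    apply hmono.monotone
    have := i.isLt
    simp [Fin.le_def]
    omega
  have hapos : 0 < a := by rw [ha]; exact hpos _
  have haz : a < b := by
    have h : (⟨0, hlt0⟩ : Fin k) < ⟨k - 1, hltk⟩ := by
      simp [Fin.lt_def]; omega
    rw [ha, hb]
    exact hmono h
  have hddpos : 0 < dd := by omega
  have hab : a + dd = b := by omega
  have han2 : a < n2 := by
    have h : (⟨0, hlt0⟩ : Fin k) < ⟨1, hlt1⟩ := by simp [Fin.lt_def]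
    rw [ha, hn2]
    exact hmono h
  have hn2b : n2 ≤ b := by rw [hn2]; exact hbi _
  have h2n2 : 2 ≤ n2 := by omega
  have he : ∀ i, n i = a + e i := by
    intro i; have := hai i; simp only [he']; omega
  have hfeq : ∀ i, n i + f i = b := by
    intro i; have := hbi i; simp only [hf']; omega
  have hejk : e ⟨k - 1, hltk⟩ = dd := by
    simp only [he']
    have h1 : n ⟨k - 1, hltk⟩ = b := hb.symm
    omega
  have helt : ∀ i, i ≠ (⟨k - 1, hltk⟩ : Fin k) → e i < dd := by
    intro i hi
    have hiv : i.val ≠ k - 1 := fun h => hi (Fin.ext h)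
    have h2 : i < (⟨k - 1, hltk⟩ : Fin k) := by
      rw [Fin.lt_def]; have := i.isLt; simp; omega
    have h3 : n i < b := by rw [hb]; exact hmono h2
    have h4 := hai i
    simp only [he']
    omega
  have hfj0 : f ⟨0, hlt0⟩ = dd := by
    simp only [hf']
    have h1 : n ⟨0, hlt0⟩ = a := ha.symm
    omega
  have hflt : ∀ i, i ≠ (⟨0, hlt0⟩ : Fin k) → f i < dd := by
    intro i hi
    have hiv : i.val ≠ 0 := fun h => hi (Fin.ext h)
    have h2 : (⟨0, hlt0⟩ : Fin k) < i := by
      rw [Fin.lt_def]; simp; omega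
    have h3 : a < n i := by rw [ha]; exact hmono h2
    have h4 := hbi i
    simp only [hf']
    omega
  -- k ≤ b
  have hkstep : ∀ j, ∀ hj : j < k, a + j ≤ n ⟨j, hj⟩ := by
    intro j
    induction j with
    | zero =>
      intro hj
      have h0 : n ⟨0, hj⟩ = a := ha.symm
      omega
    | succ j ih =>
      intro hj
      have h1 := ih (by omega)
      have h2 : n ⟨j, by omega⟩ < n ⟨j + 1, hj⟩ := hmono (by simp [Fin.lt_def])
      omega
  have hkb : k ≤ b := by
    have h1 := hkstep (k - 1) hltk
    have h2 : n ⟨k - 1, hltk⟩ = b := hb.symm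
    omega
  -- the size hypothesis in convenient form
  have hbig0 : 2 * k * n ⟨1, hlt1⟩ * (n ⟨k - 1, hltk⟩) ^ 2 < x := hbig
  have hbig' : 2 * k * n2 * (b * b) < x := by
    rw [← hn2, ← hb, pow_two] at hbig0
    exact hbig0
  have hx0 : 0 < x := by
    have : 0 ≤ 2 * k * n2 * (b * b) := Nat.zero_le _
    omega
  -- thresholds
  obtain ⟨t3, ht3⟩ : ∃ t3, t3 = (x - C) / a := ⟨_, rfl⟩
  obtain ⟨t2, ht2⟩ : ∃ t2, t2 = (x + C) / b + 1 := ⟨_, rfl⟩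
  have hCb : C ≤ k * (b * b) := by
    have h1 : dd * dd ≤ b * b := Nat.mul_le_mul (by omega) (by omega)
    calc C = k * (dd * dd) := hC'
    _ ≤ k * (b * b) := Nat.mul_le_mul_left k h1
  have hCx : 4 * C ≤ x := by
    have h1 : 4 * k ≤ 2 * k * n2 := by
      have ha1 : (2 * k) * 2 ≤ (2 * k) * n2 := Nat.mul_le_mul_left _ h2n2
      have ha2 : 4 * k = (2 * k) * 2 := by ring
      have ha3 : 2 * k * n2 = (2 * k) * n2 := by ring
      omega
    have h2 : (4 * k) * (b * b) ≤ (2 * k * n2) * (b * b) := Nat.mul_le_mul_right _ h1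
    have h3 : 4 * (k * (b * b)) = (4 * k) * (b * b) := by ring
    have h4 : 2 * k * n2 * (b * b) = (2 * k * n2) * (b * b) := by ring
    omega
  have hpx : x + C ≤ t2 * b := by
    have hq := Nat.div_add_mod (x + C) b
    have hr : (x + C) % b < b := Nat.mod_lt _ (by omega)
    have hexp : t2 * b = ((x + C) / b) * b + b := by rw [ht2]; ring
    have hcomm : b * ((x + C) / b) = ((x + C) / b) * b := Nat.mul_comm _ _
    omega
  have hcx : t3 * a + C ≤ x := by
    have h1 : t3 * a ≤ x - C := by rw [ht3]; exact Nat.div_mul_le_self _ _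
    omega
  -- core magnitude inequality
  have hcore : C * a + C * b + (1 + 2 * dd) * (a * b) ≤ x * dd := by
    have m1 : C * b ≤ k * ((b * b) * dd) := by
      calc C * b = (k * b) * (dd * dd) := by rw [hC']; ring
      _ ≤ (k * b) * (b * dd) := Nat.mul_le_mul_left _ (Nat.mul_le_mul_right _ (by omega))
      _ = k * ((b * b) * dd) := by ring
    have m2 : C * a ≤ k * ((b * b) * dd) :=
      le_trans (Nat.mul_le_mul_left C (le_of_lt haz)) m1
    have m3 : (1 + 2 * dd) * (a * b) ≤ 3 * ((b * b) * dd) := by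
      have h1 : (1 + 2 * dd) ≤ 3 * dd := by omega
      calc (1 + 2 * dd) * (a * b) ≤ (3 * dd) * (a * b) := Nat.mul_le_mul_right _ h1
      _ ≤ (3 * dd) * (b * b) :=
          Nat.mul_le_mul_left _ (Nat.mul_le_mul_right b (le_of_lt haz))
      _ = 3 * ((b * b) * dd) := by ring
    have m4 : 2 * (k * ((b * b) * dd)) + 3 * ((b * b) * dd) ≤ x * dd := by
      have h5 : 2 * k * n2 * (b * b) * dd ≤ x * dd :=
        Nat.mul_le_mul_right dd (le_of_lt hbig')
      have h6 : 2 * (k * ((b * b) * dd)) + 3 * ((b * b) * dd)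
          ≤ 2 * k * n2 * (b * b) * dd := by
        have h7 : 2 * (k * ((b * b) * dd)) + 3 * ((b * b) * dd)
            = (2 * k + 3) * ((b * b) * dd) := by ring
        have h8 : 2 * k * n2 * (b * b) * dd = (2 * k * n2) * ((b * b) * dd) := by ring
        rw [h7, h8]
        apply Nat.mul_le_mul_right
        have ha1 : (2 * k) * 2 ≤ (2 * k) * n2 := Nat.mul_le_mul_left _ h2n2
        have ha3 : 2 * k * n2 = (2 * k) * n2 := by ring
        omega
      omega
    omega
  have hpc : t2 + 2 * dd ≤ t3 := by
    rw [ht3]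
    rw [Nat.le_div_iff_mul_le hapos]
    apply Nat.le_of_mul_le_mul_right ?_ (show 0 < b by omega)
    have hQb : ((x + C) / b) * b ≤ x + C := Nat.div_mul_le_self _ _
    have hxb : x * b = x * a + x * dd := by rw [← hab]; ring
    have hxCb : (x - C) * b = x * b - C * b := Nat.sub_mul _ _ _
    have hCbx : C * b ≤ x * b := Nat.mul_le_mul_right b (by omega)
    have hcalc : (t2 + 2 * dd) * a * b
        = ((x + C) / b) * b * a + (1 + 2 * dd) * (a * b) := by
      rw [ht2]; ring
    have h1 : ((x + C) / b) * b * a ≤ (x + C) * a := Nat.mul_le_mul_right a hQb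
    have h2 : (x + C) * a = x * a + C * a := by ring
    omega
  -- the m-largeness conditions for struct_thm
  have hmcond : ∀ m, x ≤ m * b → 2 * (k * dd) ≤ m := by
    intro m hmb
    have h0 : dd ≤ n2 * b :=
      le_trans (by omega : dd ≤ b) (Nat.le_mul_of_pos_left b (by omega))
    have h1 : 2 * (k * dd) * b ≤ 2 * k * n2 * (b * b) := by
      calc 2 * (k * dd) * b = ((2 * k) * dd) * b := by ring
      _ ≤ ((2 * k) * (n2 * b)) * b :=
          Nat.mul_le_mul_right b (Nat.mul_le_mul_left (2 * k) h0)
      _ = 2 * k * n2 * (b * b) := by ring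
    have h2 : 2 * (k * dd) * b < m * b := by omega
    exact le_of_lt (Nat.lt_of_mul_lt_mul_right h2)
  have hmcond' : ∀ m, x + a * b ≤ m * b → 2 * (k * dd) ≤ m :=
    fun m h => hmcond m (by omega)
  -- divisibility facts
  have hgAdd : gA ∣ dd := by
    rw [hgA', ← hejk]; exact Finset.gcd_dvd (Finset.mem_univ _)
  have hgBdd : gB ∣ dd := by
    rw [hgB', ← hfj0]; exact Finset.gcd_dvd (Finset.mem_univ _)
  have hgAdZ : (gA : ℤ) ∣ (dd : ℤ) := Int.natCast_dvd_natCast.mpr hgAdd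
  have hgBdZ : (gB : ℤ) ∣ (dd : ℤ) := Int.natCast_dvd_natCast.mpr hgBdd
  have habZ : (a : ℤ) + (dd : ℤ) = (b : ℤ) := by exact_mod_cast hab
  -- the two master applications
  have hmaster1 := master_split n e f a b dd C gA gB he hfeq hab hddpos hapos
    ⟨k - 1, hltk⟩ ⟨0, hlt0⟩ hejk helt hfj0 hflt hgA' hgB' hC' x t2 t3 hmcond
    hcx hpx (by omega)
  have hcx2 : (t3 + a) * a + C ≤ x + a * b := by
    have hexp : (t3 + a) * a = t3 * a + a * a := by ring
    have h1 : a * a ≤ a * b := Nat.mul_le_mul_left a (le_of_lt haz)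
    omega
  have hpx2 : (x + a * b) + C ≤ (t2 + b) * b := by
    have hexp : (t2 + b) * b = t2 * b + b * b := by ring
    have h1 : a * b ≤ b * b := Nat.mul_le_mul_right b (le_of_lt haz)
    omega
  have hmaster2 := master_split n e f a b dd C gA gB he hfeq hab hddpos hapos
    ⟨k - 1, hltk⟩ ⟨0, hlt0⟩ hejk helt hfj0 hflt hgA' hgB' hC' (x + a * b)
    (t2 + b) (t3 + a) hmcond' hcx2 hpx2 (by omega)
  -- translation of the bottom window set
  have hBtrans : {m : ℕ | (gA : ℤ) ∣ ((x + a * b : ℕ) : ℤ) - m * a ∧ x + a * b ≤ m * b ∧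
        (m * b - (x + a * b)) ∈ NumMon f}
      = (· + a) '' {m : ℕ | (gA : ℤ) ∣ (x : ℤ) - m * a ∧ x ≤ m * b ∧
        (m * b - x) ∈ NumMon f} := by
    ext m'
    simp only [Set.mem_setOf_eq, Set.mem_image]
    constructor
    · rintro ⟨h1, h2, h3⟩
      have hm'a : a < m' := by
        by_contra hcon
        push_neg at hcon
        have := Nat.mul_le_mul_right b hcon
        omega
      refine ⟨m' - a, ⟨?_, ?_, ?_⟩, by omega⟩
      · have heq : (x : ℤ) - (↑(m' - a)) * a = (↑(x + a * b) - ↑m' * a) - a * dd := by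
          push_cast [show a ≤ m' by omega]
          linear_combination (a : ℤ) * habZ
        rw [heq]
        exact dvd_sub h1 (Dvd.dvd.mul_left hgAdZ a)
      · have := Nat.sub_mul m' a b
        have hba : a * b ≤ m' * b := Nat.mul_le_mul_right b (le_of_lt hm'a)
        omega
      · have heq2 : (m' - a) * b - x = m' * b - (x + a * b) := by
          have := Nat.sub_mul m' a b
          have hba : a * b ≤ m' * b := Nat.mul_le_mul_right b (le_of_lt hm'a)
          omega
        rw [heq2]; exact h3
    · rintro ⟨m, ⟨h1, h2, h3⟩, rfl⟩
      beta_reduce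
      refine ⟨?_, ?_, ?_⟩
      · have heq : (↑(x + a * b) : ℤ) - (↑(m + a)) * a = ((x : ℤ) - m * a) + a * dd := by
          push_cast
          linear_combination (-(a : ℤ)) * habZ
        rw [heq]
        exact dvd_add h1 (Dvd.dvd.mul_left hgAdZ a)
      · have hexp : (m + a) * b = m * b + a * b := by ring
        omega
      · have heq2 : (m + a) * b - (x + a * b) = m * b - x := by
          have hexp : (m + a) * b = m * b + a * b := by ring
          omega
        rw [heq2]; exact h3
  -- translation of the top window set
  have hAtrans : {m : ℕ | (gB : ℤ) ∣ (m : ℤ) * b - ((x + a * b : ℕ) : ℤ) ∧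
        m * a ≤ x + a * b ∧ ((x + a * b) - m * a) ∈ NumMon e} ∩ Set.Ici (t2 + b)
      = (· + b) '' ({m : ℕ | (gB : ℤ) ∣ (m : ℤ) * b - x ∧ m * a ≤ x ∧
        (x - m * a) ∈ NumMon e} ∩ Set.Ici t2) := by
    rw [← image_add_inter_Ici]
    ext m'
    simp only [Set.mem_inter_iff, Set.mem_setOf_eq, Set.mem_Ici, Set.mem_image]
    constructor
    · rintro ⟨⟨h1, h2, h3⟩, hm'⟩
      have hbm' : b ≤ m' := by omega
      refine ⟨⟨m' - b, ⟨?_, ?_, ?_⟩, by omega⟩, hm'⟩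
      · have heq : (↑(m' - b) : ℤ) * b - x = ((m' : ℤ) * b - ↑(x + a * b)) - b * dd := by
          push_cast [show b ≤ m' by omega]
          linear_combination (b : ℤ) * habZ
        rw [heq]
        exact dvd_sub h1 (Dvd.dvd.mul_left hgBdZ b)
      · have := Nat.sub_mul m' b a
        have hcm : b * a = a * b := Nat.mul_comm b a
        have hba : b * a ≤ m' * a := Nat.mul_le_mul_right a hbm'
        omega
      · have heq2 : x - (m' - b) * a = (x + a * b) - m' * a := by
          have := Nat.sub_mul m' b a
          have hcm : b * a = a * b := Nat.mul_comm b a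
          have hba : b * a ≤ m' * a := Nat.mul_le_mul_right a hbm'
          omega
        rw [heq2]; exact h3
    · rintro ⟨⟨m, ⟨h1, h2, h3⟩, rfl⟩, hm'⟩
      beta_reduce at hm' ⊢
      refine ⟨⟨?_, ?_, ?_⟩, hm'⟩
      · have heq : (↑(m + b) : ℤ) * b - ↑(x + a * b) = ((m : ℤ) * b - x) + b * dd := by
          push_cast
          linear_combination (-(b : ℤ)) * habZ
        rw [heq]
        exact dvd_add h1 (Dvd.dvd.mul_left hgBdZ b)
      · have hexp : (m + b) * a = m * a + b * a := by ring
        have hcm : b * a = a * b := Nat.mul_comm b a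
        omega
      · have heq2 : (x + a * b) - (m + b) * a = x - m * a := by
          have hexp : (m + b) * a = m * a + b * a := by ring
          have hcm : b * a = a * b := Nat.mul_comm b a
          omega
        rw [heq2]; exact h3
  -- final assembly
  have main : GDeltaSet n x = GDeltaSet n (x + a * b) := by
    rw [hmaster1, hmaster2, hBtrans, image_add_inter_Iic, DSet_image_add, hAtrans,
      DSet_image_add]
  rw [ha, hb] at main
  exact main
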